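/- Let n ≥ 1, p ∈ (1,2], s ∈ (0,1), and κ ∈ [0, 1). Let 1 ≤ ρ₁ < ρ₂ ≤ 2, set ρ̃ = (ρ₂−ρ₁)/4, let m ≥ 3 be an integer, and let m₁, H > 0. Let u : ℝⁿ → ℝ satisfy |u(x) − u(y)| ≤ H|x−y|^κ for all x, y ∈ B_{ρ₂}. Let x̄ ∈ B_{(ρ₁+ρ₂)/2} and ȳ ∈ B_{(3ρ₂+ρ₁)/4} with ā := x̄ − ȳ ≠ 0, and assume: (i) u(x̄+z) − u(ȳ+z) − m₁ψ(x̄+z) ≤ u(x̄) − u(ȳ) − m₁ψ(x̄) for every z ∈ ℝⁿ; (ii) m₁ψ(x̄) ≤ u(x̄) − u(ȳ). Let δ₀ ∈ (0, 1/2), δ = δ₀|ā|, and θ ∈ (0,1) with δ < |ā|^θ < ρ̃. Then there exists a constant C, depending only on n, p, s, κ, H, m and m₁, such that ∫_{B_ρ̃ \ B_δ} [J_p(u(x̄) − u(x̄+z)) − J_p(u(ȳ) − u(ȳ+z))] |z|^{−n−sp} dz ≥ −C [ ∫_δ^{|ā|^θ} r^{2(p−1)−1−sp} dr + |ā|^{κ(p−1)(m−1)/m}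 ∫_δ^{|ā|^θ} r^{p−2−sp} dr + |ā|^{κ(p−1) − θ sp} ]. -/

import Mathlib

open Metric MeasureTheory

/-- For `p > 1`, `J_p(t) = |t|^{p-2} t`, with the convention `J_p(0) = 0`. -/
noncomputable def Jp (p t : ℝ) : ℝ := |t| ^ (p - 2) * t

/-- The localization function `ψ(x) = ((|x|² − ρ₁²)₊)^m`. -/
noncomputable def psiFun (n : ℕ) (ρ₁ : ℝ) (m : ℕ) (x : EuclideanSpace ℝ (Fin n)) : ℝ :=
  (max (‖x‖ ^ 2 - ρ₁ ^ 2) 0) ^ m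


open Set
open scoped NNReal RealInnerProductSpace




lemma jp_of_nonneg {p t : ℝ} (hp1 : 1 < p) (ht : 0 ≤ t) : Jp p t = t ^ (p - 1) := by
  rcases eq_or_lt_of_le ht with h | h
  · simp [Jp, ← h, Real.zero_rpow (by linarith : p - 1 ≠ 0)]
  · rw [Jp, abs_of_pos h, show p - 1 = (p - 2) + 1 by ring, Real.rpow_add_one h.ne']

lemma jp_of_nonpos {p t : ℝ} (hp1 : 1 < p) (ht : t ≤ 0) : Jp p t = -((-t) ^ (p - 1)) := by
  rcases eq_or_lt_of_le ht with h | h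
  · simp [Jp, h, Real.zero_rpow (by linarith : p - 1 ≠ 0)]
  · have hnt : 0 < -t := by linarith
    rw [Jp, abs_of_neg h, show p - 1 = (p - 2) + 1 by ring, Real.rpow_add_one hnt.ne']
    ring

lemma jp_mono {p : ℝ} (hp1 : 1 < p) : Monotone (Jp p) := by
  intro x y hxy
  have hq : (0:ℝ) ≤ p - 1 := by linarith
  rcases le_or_gt 0 x with hx | hx
  · rw [jp_of_nonneg hp1 hx, jp_of_nonneg hp1 (hx.trans hxy)]
    exact Real.rpow_le_rpow hx hxy hq
  · rcases le_or_gt 0 y with hy | hy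
    · rw [jp_of_nonpos hp1 hx.le, jp_of_nonneg hp1 hy]
      have h1 : (0:ℝ) ≤ (-x) ^ (p-1) := Real.rpow_nonneg (by linarith) _
      have h2 : (0:ℝ) ≤ y ^ (p-1) := Real.rpow_nonneg hy _
      linarith
    · rw [jp_of_nonpos hp1 hx.le, jp_of_nonpos hp1 hy.le]
      have := Real.rpow_le_rpow (by linarith : (0:ℝ) ≤ -y) (by linarith : -y ≤ -x) hq
      linarith

lemma add_rpow_le {a b q : ℝ} (ha : 0 ≤ a) (hb : 0 ≤ b) (hq0 : 0 ≤ q) (hq1 : q ≤ 1) :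
    (a + b) ^ q ≤ a ^ q + b ^ q := by
  have h := NNReal.rpow_add_le_add_rpow a.toNNReal b.toNNReal hq0 hq1
  have hab : ((a.toNNReal + b.toNNReal : ℝ≥0) : ℝ) = a + b := by
    simp [Real.coe_toNNReal _ ha, Real.coe_toNNReal _ hb]
  calc (a + b) ^ q = (((a.toNNReal + b.toNNReal : ℝ≥0) : ℝ)) ^ q := by rw [hab]
    _ = (((a.toNNReal + b.toNNReal) ^ q : ℝ≥0) : ℝ) := by rw [← NNReal.coe_rpow]
    _ ≤ ((a.toNNReal ^ q + b.toNNReal ^ q : ℝ≥0) : ℝ) := by exact_mod_cast h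
    _ = a ^ q + b ^ q := by
        simp [NNReal.coe_rpow, Real.coe_toNNReal _ ha, Real.coe_toNNReal _ hb]

lemma jp_holder {p : ℝ} (hp1 : 1 < p) (hp2 : p ≤ 2) (y c : ℝ) (hc : 0 ≤ c) :
    Jp p y - Jp p (y - c) ≤ 2 * c ^ (p - 1) := by
  have hq0 : (0:ℝ) ≤ p - 1 := by linarith
  have hq1 : p - 1 ≤ 1 := by linarith
  have hcq : (0:ℝ) ≤ c ^ (p-1) := Real.rpow_nonneg hc _
  rcases le_or_gt 0 (y - c) with h1 | h1
  · have hy : 0 ≤ y := by linarith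
    rw [jp_of_nonneg hp1 hy, jp_of_nonneg hp1 h1]
    have : y ^ (p-1) ≤ (y - c) ^ (p-1) + c ^ (p-1) := by
      have := add_rpow_le h1 hc hq0 hq1
      simpa using this
    linarith
  · rcases le_or_gt 0 y with hy | hy
    · rw [jp_of_nonneg hp1 hy, jp_of_nonpos hp1 h1.le]
      have hyc : y ≤ c := by linarith
      have h2 : y ^ (p-1) ≤ c ^ (p-1) := Real.rpow_le_rpow hy hyc hq0
      have h3 : (-(y-c)) ^ (p-1) ≤ c ^ (p-1) :=
        Real.rpow_le_rpow (by linarith) (by linarith) hq0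
      linarith
    · rw [jp_of_nonpos hp1 hy.le, jp_of_nonpos hp1 h1.le]
      have : (c + (-y)) ^ (p-1) ≤ c ^ (p-1) + (-y) ^ (p-1) :=
        add_rpow_le hc (by linarith) hq0 hq1
      have he : -(y - c) = c + (-y) := by ring
      rw [he]
      linarith

lemma jp_lower {p : ℝ} (hp1 : 1 < p) (hp2 : p ≤ 2) {x y c : ℝ} (hc : 0 ≤ c)
    (h : y - c ≤ x) : -(2 * c ^ (p - 1)) ≤ Jp p x - Jp p y := by
  have h1 := jp_mono hp1 h
  have h2 := jp_holder hp1 hp2 y c hc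
  linarith



lemma pow_sub_pow_le {x y : ℝ} (hy : 0 ≤ y) (hxy : y ≤ x) (k : ℕ) :
    x ^ k - y ^ k ≤ k * x ^ (k - 1) * (x - y) := by
  have hx : 0 ≤ x := hy.trans hxy
  rw [← geom_sum₂_mul x y k]
  have hsum : (∑ i ∈ Finset.range k, x ^ i * y ^ (k - 1 - i)) ≤ k * x ^ (k - 1) := by
    calc (∑ i ∈ Finset.range k, x ^ i * y ^ (k - 1 - i))
        ≤ ∑ _i ∈ Finset.range k, x ^ (k - 1) := by
          apply Finset.sum_le_sum
          intro i hi
          have hik : i ≤ k - 1 := by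
            have := Finset.mem_range.mp hi; omega
          calc x ^ i * y ^ (k - 1 - i) ≤ x ^ i * x ^ (k - 1 - i) := by
                apply mul_le_mul_of_nonneg_left (pow_le_pow_left₀ hy hxy _) (pow_nonneg hx _)
            _ = x ^ (k - 1) := by rw [← pow_add]; congr 1; omega
      _ = k * x ^ (k - 1) := by rw [Finset.sum_const, Finset.card_range]; ring
  exact mul_le_mul_of_nonneg_right hsum (by linarith)

lemma add_pow_le' {a b : ℝ} (ha : 0 ≤ a) (hb : 0 ≤ b) (k : ℕ) :
    (a + b) ^ k ≤ 2 ^ k * (a ^ k + b ^ k) := by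
  have h1 : a + b ≤ 2 * max a b := by
    rcases le_total a b with h | h
    · simp [max_eq_right h]; linarith
    · simp [max_eq_left h]; linarith
  calc (a + b) ^ k ≤ (2 * max a b) ^ k :=
        pow_le_pow_left₀ (by positivity) h1 k
    _ = 2 ^ k * (max a b) ^ k := by rw [mul_pow]
    _ ≤ 2 ^ k * (a ^ k + b ^ k) := by
        apply mul_le_mul_of_nonneg_left _ (by positivity)
        rcases le_total a b with h | h
        · rw [max_eq_right h]; nlinarith [pow_nonneg ha k]
        · rw [max_eq_left h]; nlinarith [pow_nonneg hb k]

lemma psi_diff_le (n : ℕ) (ρ₁ : ℝ) (m : ℕ) (hm : 3 ≤ m) (x z : EuclideanSpace ℝ (Fin n))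
    (hx : ‖x‖ ≤ 2) (hz : ‖z‖ ≤ 1) :
    psiFun n ρ₁ m (x + z) - psiFun n ρ₁ m x ≤
      ((m : ℝ) * 2 ^ m * 5 ^ m) *
        ((max (‖x‖ ^ 2 - ρ₁ ^ 2) 0) ^ (m - 1) * ‖z‖ + ‖z‖ ^ 2) := by
  set d := max (‖x‖ ^ 2 - ρ₁ ^ 2) 0 with hd
  have hd0 : 0 ≤ d := le_max_right _ _
  set e := ‖x + z‖ ^ 2 - ‖x‖ ^ 2 with he
  have hz0 : (0:ℝ) ≤ ‖z‖ := norm_nonneg _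
  have hee : |e| ≤ 5 * ‖z‖ := by
    have hexp : ‖x + z‖ ^ 2 = ‖x‖ ^ 2 + 2 * ⟪x, z⟫ + ‖z‖ ^ 2 := norm_add_sq_real x z
    have hinner : |⟪x, z⟫| ≤ ‖x‖ * ‖z‖ := abs_real_inner_le_norm x z
    have h1 : |e| ≤ 2 * (‖x‖ * ‖z‖) + ‖z‖ ^ 2 := by
      rw [he, hexp]
      have := abs_le.mp hinner
      rw [abs_le]
      constructor <;> nlinarith
    nlinarith
  -- ψ(x+z) ≤ (d + |e|)^m
  have hstep : max (‖x + z‖ ^ 2 - ρ₁ ^ 2) 0 ≤ d + |e| := by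
    apply max_le _ (by positivity)
    have : ‖x + z‖ ^ 2 - ρ₁ ^ 2 = (‖x‖ ^ 2 - ρ₁ ^ 2) + e := by rw [he]; ring
    rw [this]
    have h2 : ‖x‖ ^ 2 - ρ₁ ^ 2 ≤ d := le_max_left _ _
    have := le_abs_self e
    linarith
  have h3 : psiFun n ρ₁ m (x + z) ≤ (d + |e|) ^ m :=
    pow_le_pow_left₀ (le_max_right _ _) hstep m
  have h4 : (d + |e|) ^ m - d ^ m ≤ m * (d + |e|) ^ (m - 1) * |e| := by
    have := pow_sub_pow_le (x := d + |e|) (y := d) hd0 (by simp [abs_nonneg]) m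
    simpa using this
  have h5 : (d + |e|) ^ (m - 1) ≤ 2 ^ m * (d ^ (m - 1) + |e| ^ (m - 1)) := by
    calc (d + |e|) ^ (m - 1) ≤ 2 ^ (m - 1) * (d ^ (m - 1) + |e| ^ (m - 1)) :=
          add_pow_le' hd0 (abs_nonneg e) (m - 1)
      _ ≤ 2 ^ m * (d ^ (m - 1) + |e| ^ (m - 1)) := by
          apply mul_le_mul_of_nonneg_right (pow_le_pow_right₀ (by norm_num) (by omega))
          positivity
  have habs : (0:ℝ) ≤ |e| := abs_nonneg e
  have hem : |e| ^ (m - 1) * |e| ≤ 5 ^ m * ‖z‖ ^ 2 := by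
    have h6 : |e| ^ (m - 1) * |e| = |e| ^ m := by
      rw [← pow_succ]; congr 1; omega
    rw [h6]
    calc |e| ^ m ≤ (5 * ‖z‖) ^ m := pow_le_pow_left₀ habs hee m
      _ = 5 ^ m * ‖z‖ ^ m := by rw [mul_pow]
      _ ≤ 5 ^ m * ‖z‖ ^ 2 := by
          apply mul_le_mul_of_nonneg_left _ (by positivity)
          exact pow_le_pow_of_le_one hz0 hz (by omega)
  have hpsix : psiFun n ρ₁ m x = d ^ m := rfl
  have key : psiFun n ρ₁ m (x + z) - psiFun n ρ₁ m x ≤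
      (m : ℝ) * 2 ^ m * (d ^ (m - 1) * |e| + 5 ^ m * ‖z‖ ^ 2) := by
    rw [hpsix]
    have h7 : (m:ℝ) * (d + |e|) ^ (m-1) * |e| ≤
        (m:ℝ) * (2 ^ m * (d ^ (m - 1) + |e| ^ (m - 1))) * |e| := by
      apply mul_le_mul_of_nonneg_right _ habs
      exact mul_le_mul_of_nonneg_left h5 (by positivity)
    have h8 : (m:ℝ) * (2 ^ m * (d ^ (m - 1) + |e| ^ (m - 1))) * |e|
        = (m:ℝ) * 2 ^ m * (d ^ (m-1) * |e| + |e| ^ (m-1) * |e|) := by ring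
    have hM : (0:ℝ) ≤ (m:ℝ) * 2 ^ m := by positivity
    have h11 : (m:ℝ) * 2 ^ m * (d ^ (m-1) * |e| + |e| ^ (m-1) * |e|)
        ≤ (m:ℝ) * 2 ^ m * (d ^ (m-1) * |e| + 5 ^ m * ‖z‖ ^ 2) := by
      apply mul_le_mul_of_nonneg_left _ hM
      linarith
    linarith
  calc psiFun n ρ₁ m (x + z) - psiFun n ρ₁ m x
      ≤ (m : ℝ) * 2 ^ m * (d ^ (m - 1) * |e| + 5 ^ m * ‖z‖ ^ 2) := key
    _ ≤ ((m : ℝ) * 2 ^ m * 5 ^ m) * (d ^ (m - 1) * ‖z‖ + ‖z‖ ^ 2) := by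
        have h9 : d ^ (m-1) * |e| ≤ d ^ (m-1) * (5 * ‖z‖) :=
          mul_le_mul_of_nonneg_left hee (by positivity)
        have h10 : (5:ℝ) ≤ 5 ^ m := by
          calc (5:ℝ) = 5 ^ 1 := by norm_num
            _ ≤ 5 ^ m := pow_le_pow_right₀ (by norm_num) (by omega)
        have hdm : (0:ℝ) ≤ d ^ (m-1) := by positivity
        have hM : (0:ℝ) ≤ (m:ℝ) * 2 ^ m := by positivity
        have h11 : 5 * (d ^ (m-1) * ‖z‖) ≤ 5 ^ m * (d ^ (m-1) * ‖z‖) :=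
          mul_le_mul_of_nonneg_right h10 (mul_nonneg hdm hz0)
        have hsum : d ^ (m-1) * |e| + 5 ^ m * ‖z‖ ^ 2
            ≤ 5 ^ m * (d ^ (m-1) * ‖z‖ + ‖z‖ ^ 2) := by
          have : d ^ (m-1) * |e| ≤ 5 ^ m * (d ^ (m-1) * ‖z‖) := by linarith
          linarith [this]
        calc (m:ℝ) * 2 ^ m * (d ^ (m - 1) * |e| + 5 ^ m * ‖z‖ ^ 2)
            ≤ (m:ℝ) * 2 ^ m * (5 ^ m * (d ^ (m-1) * ‖z‖ + ‖z‖ ^ 2)) :=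
              mul_le_mul_of_nonneg_left hsum hM
          _ = (m:ℝ) * 2 ^ m * 5 ^ m * (d ^ (m-1) * ‖z‖ + ‖z‖ ^ 2) := by ring


lemma annulus_rpow_integral (n : ℕ) (hn : 1 ≤ n) {a₁ a₂ : ℝ} (h1 : 0 < a₁) (h12 : a₁ ≤ a₂)
    (γ : ℝ) :
    ∫ z in (ball (0 : EuclideanSpace ℝ (Fin n)) a₂ \ ball 0 a₁), ‖z‖ ^ γ =
      ((n : ℝ) * (volume (ball (0 : EuclideanSpace ℝ (Fin n)) 1)).toReal) *
        ∫ r in a₁..a₂, r ^ (γ + n - 1) := by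
  set E := EuclideanSpace ℝ (Fin n)
  haveI : Nontrivial E := Module.nontrivial_of_finrank_pos (R := ℝ)
    (by rw [finrank_euclideanSpace_fin]; omega)
  have hdim : Module.finrank ℝ E = n := finrank_euclideanSpace_fin
  set F : ℝ → ℝ := Set.indicator (Ico a₁ a₂) (fun r : ℝ => r ^ γ) with hF
  have hset : (ball (0 : E) a₂ \ ball 0 a₁) = (fun z : E => ‖z‖) ⁻¹' (Ico a₁ a₂) := by
    ext z
    simp [mem_ball_zero_iff, mem_diff, mem_Ico, not_lt, and_comm]
  have hcomp : ∀ z : E, F ‖z‖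
      = Set.indicator ((fun z : E => ‖z‖) ⁻¹' (Ico a₁ a₂)) (fun z : E => ‖z‖ ^ γ) z := by
    intro z
    by_cases hz : ‖z‖ ∈ Ico a₁ a₂ <;> simp [hF, Set.indicator, hz]
  have hLHS : ∫ z in (ball (0 : E) a₂ \ ball 0 a₁), ‖z‖ ^ γ = ∫ z : E, F ‖z‖ := by
    rw [hset, ← integral_indicator (measurableSet_Ico.preimage (continuous_norm.measurable))]
    apply integral_congr_ae
    filter_upwards with z
    exact (hcomp z).symm
  rw [hLHS, integral_fun_norm_addHaar volume F, hdim]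
  have key : ∫ y in Ioi (0:ℝ), y ^ (n - 1) • F y = ∫ r in a₁..a₂, r ^ (γ + n - 1) := by
    have hsub : Ico a₁ a₂ ⊆ Ioi (0:ℝ) := fun y hy => lt_of_lt_of_le h1 hy.1
    have step1 : ∀ y : ℝ, y ^ (n - 1) • F y
        = Set.indicator (Ico a₁ a₂) (fun r : ℝ => r ^ (n-1) * r ^ γ) y := by
      intro y
      by_cases hy : y ∈ Ico a₁ a₂ <;> simp [hF, Set.indicator, hy]
    simp_rw [step1]
    rw [integral_indicator measurableSet_Ico, Measure.restrict_restrict measurableSet_Ico,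
      Set.inter_eq_left.mpr hsub]
    have step2 : ∀ y ∈ Ico a₁ a₂, y ^ (n-1) * y ^ γ = y ^ (γ + n - 1) := by
      intro y hy
      have hy0 : 0 < y := lt_of_lt_of_le h1 hy.1
      rw [← Real.rpow_natCast y (n-1), ← Real.rpow_add hy0]
      congr 1
      have : ((n - 1 : ℕ) : ℝ) = (n : ℝ) - 1 := by
        have : (1:ℕ) ≤ n := hn
        push_cast [Nat.cast_sub this]
        ring
      rw [this]; ring
    rw [setIntegral_congr_fun measurableSet_Ico step2, intervalIntegral.integral_of_le h12,
      integral_Ico_eq_integral_Ioo' (measure_singleton _), integral_Ioc_eq_integral_Ioo' (measure_singleton _)]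
  rw [key, nsmul_eq_mul, smul_eq_mul]
  rw [measureReal_def]; ring


lemma integrableOn_rpow_annulus (n : ℕ) {a₁ a₂ : ℝ} (h1 : 0 < a₁) (γ : ℝ) :
    IntegrableOn (fun z : EuclideanSpace ℝ (Fin n) => ‖z‖ ^ γ)
      (ball 0 a₂ \ ball 0 a₁) := by
  have hSmeas : MeasurableSet (ball (0 : EuclideanSpace ℝ (Fin n)) a₂ \ ball 0 a₁) :=
    measurableSet_ball.diff measurableSet_ball
  have hcont : ContinuousOn (fun z : EuclideanSpace ℝ (Fin n) => ‖z‖ ^ γ)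
      (ball 0 a₂ \ ball 0 a₁) := by
    intro z hz
    rw [Set.mem_diff, mem_ball_zero_iff, mem_ball_zero_iff, not_lt] at hz
    have hz1 : 0 < ‖z‖ := lt_of_lt_of_le h1 hz.2
    exact ((Real.continuousAt_rpow_const ‖z‖ γ (Or.inl hz1.ne')).comp
      continuous_norm.continuousAt).continuousWithinAt
  refine ⟨hcont.aestronglyMeasurable hSmeas, ?_⟩
  apply HasFiniteIntegral.restrict_of_bounded
    (C := max (a₁ ^ γ) (a₂ ^ γ))
    (lt_of_le_of_lt (measure_mono Set.diff_subset) measure_ball_lt_top)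
  · apply ae_restrict_of_forall_mem hSmeas
    intro z hz
    rw [Set.mem_diff, mem_ball_zero_iff, mem_ball_zero_iff, not_lt] at hz
    have hz1 : 0 < ‖z‖ := lt_of_lt_of_le h1 hz.2
    rw [Real.norm_eq_abs, abs_of_nonneg (Real.rpow_nonneg (norm_nonneg z) γ)]
    rcases le_or_gt 0 γ with hγ | hγ
    · exact le_max_of_le_right (Real.rpow_le_rpow (norm_nonneg z) hz.1.le hγ)
    · exact le_max_of_le_left (Real.rpow_le_rpow_of_nonpos h1 hz.2 hγ.le)

set_option maxHeartbeats 1000000 in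
theorem stmt_11 (n : ℕ) (hn : 1 ≤ n) (p s κ : ℝ) (hp1 : 1 < p) (hp2 : p ≤ 2)
    (hs0 : 0 < s) (hs1 : s < 1) (hκ0 : 0 ≤ κ) (hκ1 : κ < 1)
    (m : ℕ) (hm : 3 ≤ m) (m₁ H : ℝ) (hm₁ : 0 < m₁) (hH : 0 < H) :
    ∃ C : ℝ, 0 < C ∧
      ∀ ρ₁ ρ₂ : ℝ, 1 ≤ ρ₁ → ρ₁ < ρ₂ → ρ₂ ≤ 2 →
      ∀ u : EuclideanSpace ℝ (Fin n) → ℝ,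
        (∀ x ∈ ball (0 : EuclideanSpace ℝ (Fin n)) ρ₂,
          ∀ y ∈ ball (0 : EuclideanSpace ℝ (Fin n)) ρ₂,
            |u x - u y| ≤ H * ‖x - y‖ ^ κ) →
      ∀ xb ∈ ball (0 : EuclideanSpace ℝ (Fin n)) ((ρ₁ + ρ₂) / 2),
      ∀ yb ∈ ball (0 : EuclideanSpace ℝ (Fin n)) ((3 * ρ₂ + ρ₁) / 4),
        xb - yb ≠ 0 →
        (∀ z : EuclideanSpace ℝ (Fin n),
          u (xb + z) - u (yb + z) - m₁ * psiFun n ρ₁ m (xb + z)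
            ≤ u xb - u yb - m₁ * psiFun n ρ₁ m xb) →
        m₁ * psiFun n ρ₁ m xb ≤ u xb - u yb →
      ∀ δ₀ θ : ℝ, 0 < δ₀ → δ₀ < 1 / 2 → 0 < θ → θ < 1 →
        δ₀ * ‖xb - yb‖ < ‖xb - yb‖ ^ θ → ‖xb - yb‖ ^ θ < (ρ₂ - ρ₁) / 4 →
        -C * ((∫ r in (δ₀ * ‖xb - yb‖)..(‖xb - yb‖ ^ θ), r ^ (2 * (p - 1) - 1 - s * p))
            + ‖xb - yb‖ ^ (κ * (p - 1) * ((m : ℝ) - 1) / m)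
              * (∫ r in (δ₀ * ‖xb - yb‖)..(‖xb - yb‖ ^ θ), r ^ (p - 2 - s * p))
            + ‖xb - yb‖ ^ (κ * (p - 1) - θ * (s * p)))
          ≤ ∫ z in (ball (0 : EuclideanSpace ℝ (Fin n)) ((ρ₂ - ρ₁) / 4)
                \ ball 0 (δ₀ * ‖xb - yb‖)),
              (Jp p (u xb - u (xb + z)) - Jp p (u yb - u (yb + z)))
                * ‖z‖ ^ (-(n : ℝ) - s * p) := by
  classical
  have hp0 : (0:ℝ) < p := by linarith
  have hq0 : (0:ℝ) < p - 1 := by linarith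
  have hq1 : p - 1 ≤ 1 := by linarith
  have hsp : (0:ℝ) < s * p := by positivity
  have hm0 : 0 < m := by omega
  have hmR : (0:ℝ) < (m:ℝ) := by exact_mod_cast hm0
  have hm1R : (1:ℝ) ≤ (m:ℝ) := by exact_mod_cast (by omega : 1 ≤ m)
  set q : ℝ := p - 1 with hq
  set ω : ℝ := ((volume (ball (0 : EuclideanSpace ℝ (Fin n)) 1)).toReal) with hω
  have hω0 : 0 ≤ ω := ENNReal.toReal_nonneg
  set nω : ℝ := (n:ℝ) * ω with hnω
  have hnω0 : 0 ≤ nω := by positivity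
  set C3 : ℝ := (m:ℝ) * 2 ^ m * 5 ^ m with hC3
  have hC30 : 0 < C3 := by positivity
  set K : ℝ := (H / m₁) ^ (((m:ℝ) - 1) * q / m) with hK
  have hK0 : 0 ≤ K := Real.rpow_nonneg (by positivity) _
  set CB : ℝ := 2 * (m₁ * C3) ^ q * nω with hCB
  have hCB0 : 0 ≤ CB := by positivity
  set CA : ℝ := CB * K with hCA
  have hCA0 : 0 ≤ CA := mul_nonneg hCB0 hK0
  set CC : ℝ := 2 * (2 * H) ^ q * nω / (s * p) with hCC
  have hCC0 : 0 ≤ CC := by positivity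
  clear_value q ω nω C3 K CB CA CC
  refine ⟨CA + CB + CC + 1, by positivity, ?_⟩
  intro ρ₁ ρ₂ hρ₁ hρ₁₂ hρ₂ u hu xb hxb yb hyb hne hi hii δ₀ θ hδ₀0 hδ₀half hθ0 hθ1 hδltb hbltR
  set A : ℝ := ‖xb - yb‖ with hA
  have hA0 : 0 < A := by rw [hA]; exact norm_pos_iff.mpr hne
  set R : ℝ := (ρ₂ - ρ₁) / 4 with hR
  set δ : ℝ := δ₀ * A with hδ
  set b : ℝ := A ^ θ with hb
  have hδ0 : 0 < δ := mul_pos hδ₀0 hA0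
  have hb0 : 0 < b := lt_trans hδ0 hδltb
  have hR0 : 0 < R := lt_trans hb0 hbltR
  have hR4 : R ≤ 1/4 := by rw [hR]; linarith
  have hb1 : b ≤ 1 := by linarith
  have hA1 : A < 1 := by
    by_contra hcon
    push_neg at hcon
    have h1 : (1:ℝ) ^ θ ≤ A ^ θ := Real.rpow_le_rpow (by norm_num) hcon hθ0.le
    rw [Real.one_rpow, ← hb] at h1
    linarith
  have hAb : A ≤ b := by
    have h1 : A ^ (1:ℝ) ≤ A ^ θ := Real.rpow_le_rpow_of_exponent_ge hA0 hA1.le hθ1.le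
    rwa [Real.rpow_one] at h1
  clear_value A R δ b
  -- ball memberships
  have hxbn : ‖xb‖ < (ρ₁ + ρ₂) / 2 := mem_ball_zero_iff.mp hxb
  have hybn : ‖yb‖ < (3 * ρ₂ + ρ₁) / 4 := mem_ball_zero_iff.mp hyb
  have hxb2 : ‖xb‖ ≤ 2 := by linarith
  have hxbρ₂ : xb ∈ ball (0 : EuclideanSpace ℝ (Fin n)) ρ₂ :=
    mem_ball_zero_iff.mpr (by linarith)
  have hybρ₂ : yb ∈ ball (0 : EuclideanSpace ℝ (Fin n)) ρ₂ :=
    mem_ball_zero_iff.mpr (by linarith)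
  have hmemx : ∀ z : EuclideanSpace ℝ (Fin n), ‖z‖ < R →
      xb + z ∈ ball (0 : EuclideanSpace ℝ (Fin n)) ρ₂ := by
    intro z hz
    rw [mem_ball_zero_iff]
    calc ‖xb + z‖ ≤ ‖xb‖ + ‖z‖ := norm_add_le _ _
      _ < ρ₂ := by rw [hR] at hz; linarith
  have hmemy : ∀ z : EuclideanSpace ℝ (Fin n), ‖z‖ < R →
      yb + z ∈ ball (0 : EuclideanSpace ℝ (Fin n)) ρ₂ := by
    intro z hz
    rw [mem_ball_zero_iff]
    calc ‖yb + z‖ ≤ ‖yb‖ + ‖z‖ := norm_add_le _ _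
      _ < ρ₂ := by rw [hR] at hz; linarith
  have hAκ : u xb - u yb ≤ H * A ^ κ := by
    have h1 := hu xb hxbρ₂ yb hybρ₂
    rw [← hA] at h1
    exact le_trans (le_abs_self _) h1
  -- bound on d
  set d : ℝ := max (‖xb‖ ^ 2 - ρ₁ ^ 2) 0 with hd
  have hd0 : 0 ≤ d := le_max_right _ _
  have hψxb : psiFun n ρ₁ m xb = d ^ m := rfl
  clear_value d
  have hdm : d ^ m ≤ H / m₁ * A ^ κ := by
    have h1 : m₁ * d ^ m ≤ H * A ^ κ := by
      rw [← hψxb]; exact le_trans hii hAκ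
    rw [div_mul_eq_mul_div, le_div_iff₀ hm₁]
    linarith [h1, mul_comm (d ^ m) m₁]
  set eA : ℝ := κ * q * ((m:ℝ) - 1) / (m:ℝ) with heA
  clear_value eA
  have hAeA0 : 0 ≤ A ^ eA := Real.rpow_nonneg hA0.le _
  have hdq : ((d ^ (m-1) : ℝ)) ^ q ≤ K * A ^ eA := by
    set w : ℝ := ((m:ℝ) - 1) * q / m with hw
    have hw0 : 0 ≤ w := by
      apply div_nonneg (mul_nonneg (by linarith) hq0.le) hmR.le
    have e1 : ((d ^ (m-1) : ℝ)) ^ q = (d ^ m : ℝ) ^ w := by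
      rw [← Real.rpow_natCast d (m-1), ← Real.rpow_natCast d m,
        ← Real.rpow_mul hd0, ← Real.rpow_mul hd0]
      congr 1
      rw [Nat.cast_sub (by omega : 1 ≤ m), Nat.cast_one, hw]
      field_simp
    rw [e1]
    calc (d ^ m : ℝ) ^ w ≤ (H / m₁ * A ^ κ) ^ w :=
          Real.rpow_le_rpow (by positivity) hdm hw0
      _ = (H / m₁) ^ w * (A ^ κ) ^ w :=
          Real.mul_rpow (by positivity) (Real.rpow_nonneg hA0.le _)
      _ = K * A ^ eA := by
          rw [← Real.rpow_mul hA0.le, hK, hw, heA]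
          congr 1
          ring
  -- the sets
  set S : Set (EuclideanSpace ℝ (Fin n)) := ball (0 : EuclideanSpace ℝ (Fin n)) R \ ball 0 δ
    with hSdef
  set S₁ : Set (EuclideanSpace ℝ (Fin n)) := ball (0 : EuclideanSpace ℝ (Fin n)) b \ ball 0 δ
    with hS₁def
  set S₂ : Set (EuclideanSpace ℝ (Fin n)) := ball (0 : EuclideanSpace ℝ (Fin n)) R \ ball 0 b
    with hS₂def
  have hSmeas : MeasurableSet S := measurableSet_ball.diff measurableSet_ball
  have hS₁meas : MeasurableSet S₁ := measurableSet_ball.diff measurableSet_ball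
  have hS₂meas : MeasurableSet S₂ := measurableSet_ball.diff measurableSet_ball
  have hS12 : S = S₁ ∪ S₂ := by
    ext z
    simp only [hSdef, hS₁def, hS₂def, Set.mem_union, Set.mem_diff, mem_ball_zero_iff]
    constructor
    · rintro ⟨h1, h2⟩
      by_cases hzb : ‖z‖ < b
      · exact Or.inl ⟨hzb, h2⟩
      · exact Or.inr ⟨h1, hzb⟩
    · rintro (⟨h1, h2⟩ | ⟨h1, h2⟩)
      · exact ⟨lt_trans h1 hbltR, h2⟩
      · exact ⟨h1, fun hc => h2 (lt_trans hc hδltb)⟩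
  have hdisj : Disjoint S₁ S₂ := by
    rw [Set.disjoint_left]
    intro z h1 h2
    rw [hS₁def, Set.mem_diff, mem_ball_zero_iff] at h1
    rw [hS₂def, Set.mem_diff, mem_ball_zero_iff] at h2
    exact h2.2 (mem_ball_zero_iff.mpr h1.1)
  -- the comparison function
  set g : EuclideanSpace ℝ (Fin n) → ℝ := fun z =>
    (if ‖z‖ < b then 2 * (m₁ * C3) ^ q * (K * A ^ eA * ‖z‖ ^ q + ‖z‖ ^ (2*q))
      else 2 * (2 * H) ^ q * A ^ (κ * q)) * ‖z‖ ^ (-(n:ℝ) - s * p) with hg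
  clear_value S S₁ S₂ g
  -- pointwise bound
  have key : ∀ z ∈ S, -g z ≤
      (Jp p (u xb - u (xb + z)) - Jp p (u yb - u (yb + z))) * ‖z‖ ^ (-(n:ℝ) - s * p) := by
    intro z hz
    rw [hSdef, Set.mem_diff] at hz
    have hzR : ‖z‖ < R := mem_ball_zero_iff.mp hz.1
    have hzδ : δ ≤ ‖z‖ := not_lt.mp (fun h => hz.2 (mem_ball_zero_iff.mpr h))
    have hz0 : 0 < ‖z‖ := lt_of_lt_of_le hδ0 hzδ
    have hw0 : (0:ℝ) ≤ ‖z‖ ^ (-(n:ℝ) - s * p) := Real.rpow_nonneg (norm_nonneg z) _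
    rw [hg]
    simp only []
    rw [neg_mul_eq_neg_mul]
    apply mul_le_mul_of_nonneg_right _ hw0
    by_cases hzb : ‖z‖ < b
    · rw [if_pos hzb]
      set c0 : ℝ := m₁ * max (psiFun n ρ₁ m (xb + z) - psiFun n ρ₁ m xb) 0 with hc0
      clear_value c0
      have hc00 : 0 ≤ c0 := by
        rw [hc0]; exact mul_nonneg hm₁.le (le_max_right _ _)
      have hyx : (u yb - u (yb + z)) - c0 ≤ u xb - u (xb + z) := by
        have h1 := hi z
        have h2 : m₁ * (psiFun n ρ₁ m (xb + z) - psiFun n ρ₁ m xb) ≤ c0 := by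
          rw [hc0]; exact mul_le_mul_of_nonneg_left (le_max_left _ _) hm₁.le
        have h3 : m₁ * (psiFun n ρ₁ m (xb + z) - psiFun n ρ₁ m xb)
            = m₁ * psiFun n ρ₁ m (xb + z) - m₁ * psiFun n ρ₁ m xb := mul_sub _ _ _
        linarith [h1, h2, h3]
      have hJ := jp_lower hp1 hp2 hc00 hyx
      rw [← hq] at hJ
      have hψle : max (psiFun n ρ₁ m (xb + z) - psiFun n ρ₁ m xb) 0
          ≤ C3 * (d ^ (m-1) * ‖z‖ + ‖z‖ ^ 2) := by
        apply max_le _ (by positivity)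
        have h4 := psi_diff_le n ρ₁ m hm xb z hxb2 (by linarith : ‖z‖ ≤ 1)
        rw [← hd, ← hC3] at h4
        exact h4
      have hc0le : c0 ≤ (m₁ * C3) * (d ^ (m-1) * ‖z‖ + ‖z‖ ^ 2) := by
        rw [hc0, mul_assoc]
        exact mul_le_mul_of_nonneg_left hψle hm₁.le
      have hYq : c0 ^ q ≤ (m₁ * C3) ^ q * (K * A ^ eA * ‖z‖ ^ q + ‖z‖ ^ (2*q)) := by
        have hz2 : ((‖z‖ ^ 2 : ℝ)) ^ q = ‖z‖ ^ (2*q) := by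
          rw [← Real.rpow_natCast ‖z‖ 2, ← Real.rpow_mul (norm_nonneg z)]
          norm_num
        calc c0 ^ q ≤ ((m₁ * C3) * (d ^ (m-1) * ‖z‖ + ‖z‖ ^ 2)) ^ q :=
              Real.rpow_le_rpow hc00 hc0le hq0.le
          _ = (m₁ * C3) ^ q * (d ^ (m-1) * ‖z‖ + ‖z‖ ^ 2) ^ q :=
              Real.mul_rpow (by positivity) (by positivity)
          _ ≤ (m₁ * C3) ^ q * ((d ^ (m-1) * ‖z‖) ^ q + ((‖z‖ ^ 2 : ℝ)) ^ q) := by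
              apply mul_le_mul_of_nonneg_left _ (by positivity)
              exact add_rpow_le (by positivity) (by positivity) hq0.le hq1
          _ ≤ (m₁ * C3) ^ q * (K * A ^ eA * ‖z‖ ^ q + ‖z‖ ^ (2*q)) := by
              apply mul_le_mul_of_nonneg_left _ (by positivity)
              rw [hz2]
              have h5 : (d ^ (m-1) * ‖z‖) ^ q = ((d ^ (m-1) : ℝ)) ^ q * ‖z‖ ^ q :=
                Real.mul_rpow (by positivity) (norm_nonneg z)
              have h6 : ((d ^ (m-1) : ℝ)) ^ q * ‖z‖ ^ q ≤ K * A ^ eA * ‖z‖ ^ q :=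
                mul_le_mul_of_nonneg_right hdq (Real.rpow_nonneg (norm_nonneg z) _)
              rw [h5]
              linarith
      linarith [hJ, hYq]
    · rw [if_neg hzb]
      have h8 : |u xb - u yb| ≤ H * A ^ κ := by
        have h1 := hu xb hxbρ₂ yb hybρ₂
        rwa [← hA] at h1
      have h9 : |u (xb + z) - u (yb + z)| ≤ H * A ^ κ := by
        have h1 := hu (xb + z) (hmemx z hzR) (yb + z) (hmemy z hzR)
        rwa [show xb + z - (yb + z) = xb - yb by abel, ← hA] at h1
      have hc00 : (0:ℝ) ≤ 2 * (H * A ^ κ) := by positivity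
      have hyx : (u yb - u (yb + z)) - 2 * (H * A ^ κ) ≤ u xb - u (xb + z) := by
        have h10 := neg_abs_le (u xb - u yb)
        have h11 := le_abs_self (u (xb + z) - u (yb + z))
        linarith [h8, h9, h10, h11]
      have hJ := jp_lower hp1 hp2 hc00 hyx
      rw [← hq] at hJ
      have heq : (2 * (H * A ^ κ)) ^ q = (2 * H) ^ q * A ^ (κ * q) := by
        rw [← mul_assoc, Real.mul_rpow (by positivity) (Real.rpow_nonneg hA0.le _),
          ← Real.rpow_mul hA0.le]
      linarith [hJ, heq.le]
  -- description of g on S₁ and S₂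
  have hc1 : ∀ z ∈ S₁, g z =
      (2 * (m₁ * C3) ^ q * (K * A ^ eA)) * ‖z‖ ^ (q + (-(n:ℝ) - s * p))
      + (2 * (m₁ * C3) ^ q) * ‖z‖ ^ (2*q + (-(n:ℝ) - s * p)) := by
    intro z hz
    rw [hS₁def, Set.mem_diff] at hz
    have hzb : ‖z‖ < b := mem_ball_zero_iff.mp hz.1
    have hzδ : δ ≤ ‖z‖ := not_lt.mp (fun h => hz.2 (mem_ball_zero_iff.mpr h))
    have hz0 : 0 < ‖z‖ := lt_of_lt_of_le hδ0 hzδ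
    rw [hg]
    simp only [if_pos hzb]
    rw [Real.rpow_add hz0, Real.rpow_add hz0]
    ring
  have hc2 : ∀ z ∈ S₂, g z
      = (2 * (2 * H) ^ q * A ^ (κ * q)) * ‖z‖ ^ (-(n:ℝ) - s * p) := by
    intro z hz
    rw [hS₂def, Set.mem_diff] at hz
    have hzb : ¬ (‖z‖ < b) := fun h => hz.2 (mem_ball_zero_iff.mpr h)
    rw [hg]
    simp only [if_neg hzb]
  -- integrability of g
  have hi1a : IntegrableOn
      (fun z : EuclideanSpace ℝ (Fin n) =>
        (2 * (m₁ * C3) ^ q * (K * A ^ eA)) * ‖z‖ ^ (q + (-(n:ℝ) - s * p))) S₁ volume := by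
    rw [hS₁def]
    exact (integrableOn_rpow_annulus n hδ0 _).const_mul _
  have hi1b : IntegrableOn
      (fun z : EuclideanSpace ℝ (Fin n) =>
        (2 * (m₁ * C3) ^ q) * ‖z‖ ^ (2*q + (-(n:ℝ) - s * p))) S₁ volume := by
    rw [hS₁def]
    exact (integrableOn_rpow_annulus n hδ0 _).const_mul _
  have hgS₁ : IntegrableOn g S₁ volume := by
    apply IntegrableOn.congr_fun (hi1a.add hi1b) _ hS₁meas
    intro z hz
    simp only [Pi.add_apply]
    exact (hc1 z hz).symm
  have hgS₂ : IntegrableOn g S₂ volume := by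
    have base : IntegrableOn
        (fun z : EuclideanSpace ℝ (Fin n) =>
          (2 * (2 * H) ^ q * A ^ (κ * q)) * ‖z‖ ^ (-(n:ℝ) - s * p)) S₂ volume := by
      rw [hS₂def]
      exact (integrableOn_rpow_annulus n hb0 _).const_mul _
    apply IntegrableOn.congr_fun base _ hS₂meas
    intro z hz
    exact (hc2 z hz).symm
  have hgS : IntegrableOn g S volume := by
    rw [hS12]
    exact hgS₁.union hgS₂
  -- value of the integral over S₁
  have hI1 : ∫ z in S₁, g z
      = CA * (A ^ eA * (∫ r in δ..b, r ^ (p - 2 - s * p)))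
        + CB * (∫ r in δ..b, r ^ (2*q - 1 - s * p)) := by
    rw [setIntegral_congr_fun hS₁meas hc1,
      integral_add hi1a hi1b, integral_const_mul, integral_const_mul, hS₁def,
      annulus_rpow_integral n hn hδ0 hδltb.le _,
      annulus_rpow_integral n hn hδ0 hδltb.le _,
      show q + (-(n:ℝ) - s * p) + (n:ℝ) - 1 = p - 2 - s * p by rw [hq]; ring,
      show 2*q + (-(n:ℝ) - s * p) + (n:ℝ) - 1 = 2*q - 1 - s * p by ring,
      ← hω, ← hnω, hCA, hCB]
    ring
  -- bound for the integral over S₂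
  have hI2 : ∫ z in S₂, g z ≤ CC * A ^ (κ * q - θ * (s * p)) := by
    rw [setIntegral_congr_fun hS₂meas hc2, integral_const_mul, hS₂def,
      annulus_rpow_integral n hn hb0 hbltR.le _,
      show (-(n:ℝ) - s * p) + (n:ℝ) - 1 = -(s*p) - 1 by ring, ← hω, ← hnω]
    have hval : (∫ r in b..R, r ^ (-(s*p) - 1)) ≤ b ^ (-(s*p)) / (s*p) := by
      rw [integral_rpow (Or.inr ⟨by
        intro hcon
        have h0 : s * p = 0 := by linarith
        exact absurd h0 hsp.ne',
        Set.notMem_uIcc_of_lt hb0 hR0⟩),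
        show -(s*p) - 1 + 1 = -(s*p) by ring]
      have hRnn : 0 ≤ R ^ (-(s*p)) := Real.rpow_nonneg hR0.le _
      have hbnn : 0 ≤ b ^ (-(s*p)) := Real.rpow_nonneg hb0.le _
      rw [show (R ^ (-(s*p)) - b ^ (-(s*p))) / (-(s*p))
          = (b ^ (-(s*p)) - R ^ (-(s*p))) / (s*p) by rw [div_neg, ← neg_div, neg_sub]]
      gcongr
      linarith
    have hstep : 2 * (2 * H) ^ q * A ^ (κ * q) * (nω * ∫ r in b..R, r ^ (-(s*p) - 1))
        ≤ 2 * (2 * H) ^ q * A ^ (κ * q) * (nω * (b ^ (-(s*p)) / (s*p))) := by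
      apply mul_le_mul_of_nonneg_left _ (by positivity)
      apply mul_le_mul_of_nonneg_left hval hnω0
    have hA1' : A ^ (κ*q) * A ^ (θ * -(s*p)) = A ^ (κ * q - θ * (s * p)) := by
      rw [← Real.rpow_add hA0]
      congr 1
      ring
    have hfin : 2 * (2 * H) ^ q * A ^ (κ * q) * (nω * (b ^ (-(s*p)) / (s*p)))
        = CC * A ^ (κ * q - θ * (s * p)) := by
      rw [hb, ← Real.rpow_mul hA0.le θ (-(s*p)), hCC, ← hA1']
      field_simp
    calc 2 * (2 * H) ^ q * A ^ (κ * q) * (nω * ∫ r in b..R, r ^ (-(s*p) - 1))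
        ≤ 2 * (2 * H) ^ q * A ^ (κ * q) * (nω * (b ^ (-(s*p)) / (s*p))) := hstep
      _ = CC * A ^ (κ * q - θ * (s * p)) := hfin
  -- nonnegativity of the target terms
  have hT1 : 0 ≤ ∫ r in δ..b, r ^ (2*q - 1 - s * p) :=
    intervalIntegral.integral_nonneg hδltb.le
      (fun x hx => Real.rpow_nonneg (le_trans hδ0.le hx.1) _)
  have hT2 : 0 ≤ ∫ r in δ..b, r ^ (p - 2 - s * p) :=
    intervalIntegral.integral_nonneg hδltb.le
      (fun x hx => Real.rpow_nonneg (le_trans hδ0.le hx.1) _)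
  have hT3 : 0 ≤ A ^ (κ * q - θ * (s * p)) := Real.rpow_nonneg hA0.le _
  have hX2 : 0 ≤ A ^ eA * ∫ r in δ..b, r ^ (p - 2 - s * p) := mul_nonneg hAeA0 hT2
  by_cases hint : IntegrableOn (fun z : EuclideanSpace ℝ (Fin n) =>
      (Jp p (u xb - u (xb + z)) - Jp p (u yb - u (yb + z))) * ‖z‖ ^ (-(n:ℝ) - s * p)) S volume
  · have hsum : ∫ z in S, g z = (∫ z in S₁, g z) + ∫ z in S₂, g z := by
      rw [hS12]
      exact setIntegral_union hdisj hS₂meas hgS₁ hgS₂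
    have hmono : ∫ z in S, (-(g z)) ≤ ∫ z in S,
        (Jp p (u xb - u (xb + z)) - Jp p (u yb - u (yb + z))) * ‖z‖ ^ (-(n:ℝ) - s * p) :=
      setIntegral_mono_on hgS.neg hint hSmeas key
    rw [integral_neg] at hmono
    have hgle : ∫ z in S, g z
        ≤ CA * (A ^ eA * (∫ r in δ..b, r ^ (p - 2 - s * p)))
          + CB * (∫ r in δ..b, r ^ (2*q - 1 - s * p))
          + CC * A ^ (κ * q - θ * (s * p)) := by
      rw [hsum, hI1]
      linarith [hI2]
    have hcoef : CB * (∫ r in δ..b, r ^ (2*q - 1 - s * p))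
          + CA * (A ^ eA * (∫ r in δ..b, r ^ (p - 2 - s * p)))
          + CC * A ^ (κ * q - θ * (s * p))
        ≤ (CA + CB + CC + 1) * ((∫ r in δ..b, r ^ (2*q - 1 - s * p))
          + A ^ eA * (∫ r in δ..b, r ^ (p - 2 - s * p))
          + A ^ (κ * q - θ * (s * p))) := by
      have e1 : 0 ≤ (CA + CC + 1) * (∫ r in δ..b, r ^ (2*q - 1 - s * p)) :=
        mul_nonneg (by linarith) hT1
      have e2 : 0 ≤ (CB + CC + 1) * (A ^ eA * (∫ r in δ..b, r ^ (p - 2 - s * p))) :=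
        mul_nonneg (by linarith) hX2
      have e3 : 0 ≤ (CA + CB + 1) * A ^ (κ * q - θ * (s * p)) :=
        mul_nonneg (by linarith) hT3
      have eq1 : (CA + CB + CC + 1) * ((∫ r in δ..b, r ^ (2*q - 1 - s * p))
          + A ^ eA * (∫ r in δ..b, r ^ (p - 2 - s * p))
          + A ^ (κ * q - θ * (s * p)))
          = CB * (∫ r in δ..b, r ^ (2*q - 1 - s * p))
          + CA * (A ^ eA * (∫ r in δ..b, r ^ (p - 2 - s * p)))
          + CC * A ^ (κ * q - θ * (s * p))
          + ((CA + CC + 1) * (∫ r in δ..b, r ^ (2*q - 1 - s * p))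
            + (CB + CC + 1) * (A ^ eA * (∫ r in δ..b, r ^ (p - 2 - s * p)))
            + (CA + CB + 1) * A ^ (κ * q - θ * (s * p))) := by ring
      linarith [e1, e2, e3, eq1]
    linarith [hmono, hgle, hcoef]
  · rw [integral_undef hint]
    have hsum0 : 0 ≤ (∫ r in δ..b, r ^ (2*q - 1 - s * p))
        + A ^ eA * (∫ r in δ..b, r ^ (p - 2 - s * p))
        + A ^ (κ * q - θ * (s * p)) := by linarith
    have h := mul_nonneg (by positivity : (0:ℝ) ≤ CA + CB + CC + 1) hsum0
    linarith [h]
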